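/- arXiv:1705.04887 — 5 statements merged into one kernel-verified Lean document; each statement's English description precedes it below -/
import Mathlib

section
/- For all complex a, b, ξ and ν > 0, the exponential generating function identity holds: e^{ν(aξ + b ξ̄ − ab)} = Σ_{m,n=0}^∞ (a^m b^n)/(m! n!) H^ν_{m,n}(ξ, ξ̄), where the double series converges absolutely. -/
open Complex

/-- The weighted complex Hermite polynomial `H^ν_{m,n}(ξ, ξ̄)`. -/
noncomputable def hermiteC (ν : ℝ) (m n : ℕ) (ξ : ℂ) : ℂ :=
  (m.factorial : ℂ) * (n.factorial : ℂ) * (ν : ℂ) ^ (m + n) *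
    ∑ k ∈ Finset.range (min m n + 1),
      (-1 : ℂ) ^ k * ξ ^ (m - k) * (starRingEnd ℂ ξ) ^ (n - k) /
        ((ν : ℂ) ^ k * (k.factorial : ℂ) * ((m - k).factorial : ℂ) * ((n - k).factorial : ℂ))

/-!
Write `ν(aξ + bξ̄ - ab) = z + x + y` with `z = -νab`, `x = νaξ`, `y = νbξ̄`. The product of the
three exponential series is an absolutely convergent series over triples `(k, p, q)`. Grouping
its terms by `(m, n) = (k + p, k + q)` gives finitely many terms `k ≤ min m n`, whose sum is
exactly `a^m b^n / (m! n!) · H^ν_{m,n}(ξ, ξ̄)`.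
-/

open Nat
open scoped ComplexConjugate

theorem hasSum_pow_div_factorial_mul_mul {𝕂 : Type*} [NormedDivisionRing 𝕂] [NormedAlgebra ℚ 𝕂]
    [CompleteSpace 𝕂] (x y z : 𝕂) :
    HasSum (fun t : ℕ × ℕ × ℕ => x ^ t.1 / t.1 ! * (y ^ t.2.1 / t.2.1 ! * (z ^ t.2.2 / t.2.2 !)))
      (NormedSpace.exp x * (NormedSpace.exp y * NormedSpace.exp z)) := by
  -- the summability facts are stated on their own: elaborating `summable_mul_of_summable_norm`
  -- against an expected type times out
  have hx := NormedSpace.norm_expSeries_div_summable x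
  have hy := NormedSpace.norm_expSeries_div_summable y
  have hz := NormedSpace.norm_expSeries_div_summable z
  have hyz := summable_mul_of_summable_norm hy hz
  have hxyz := summable_mul_of_summable_norm hx (hy.mul_norm hz)
  have := (NormedSpace.expSeries_div_hasSum_exp x).mul
    ((NormedSpace.expSeries_div_hasSum_exp y).mul (NormedSpace.expSeries_div_hasSum_exp z) hyz) hxyz
  simpa only using this

def sigmaFinMinSuccEquiv : (Σ mn : ℕ × ℕ, Fin (min mn.1 mn.2 + 1)) ≃ ℕ × ℕ × ℕ where
  toFun s := (s.2, s.1.1 - s.2, s.1.2 - s.2)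
  invFun t := ⟨(t.1 + t.2.1, t.1 + t.2.2), ⟨t.1, by omega⟩⟩
  left_inv := by
    rintro ⟨⟨m, n⟩, k, hk⟩
    refine Sigma.ext (Prod.ext ?_ ?_) ((Fin.heq_ext_iff ?_).2 rfl) <;> simp <;> omega
  right_inv _ := by simp

/-- Also true at `x = 0`: for `k > 0` both sides vanish, as `0 / 0 = 0`. -/
theorem pow_add_add_div_pow {K : Type*} [CommGroupWithZero K] (x : K) (k p q : ℕ) :
    x ^ (k + p + (k + q)) / x ^ k = x ^ (k + p + q) := by
  rw [show k + p + (k + q) = k + (k + p + q) by omega, pow_add]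
  refine mul_div_cancel_left_of_imp fun h => ?_
  rcases k.eq_zero_or_pos with rfl | hk
  · simp at h
  · simp [pow_eq_zero_iff hk.ne' |>.1 h, hk.ne']

theorem hermiteC_coeff_eq_sum (ν : ℝ) (a b ξ : ℂ) (m n : ℕ) :
    a ^ m * b ^ n / (m ! * n !) * hermiteC ν m n ξ =
      ∑ k ∈ Finset.range (min m n + 1), (-(ν * a * b)) ^ k / k ! *
        ((ν * a * ξ) ^ (m - k) / (m - k)! * ((ν * b * conj ξ) ^ (n - k) / (n - k)!)) := by
  rw [hermiteC, Finset.mul_sum, Finset.mul_sum]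
  refine Finset.sum_congr rfl fun k hk => ?_
  obtain ⟨hkm, hkn⟩ : k ≤ m ∧ k ≤ n := by simpa [Nat.lt_succ_iff] using hk
  obtain ⟨p, rfl⟩ := Nat.exists_eq_add_of_le hkm
  obtain ⟨q, rfl⟩ := Nat.exists_eq_add_of_le hkn
  simp only [Nat.add_sub_cancel_left]
  have hfac : ((k + p)! * (k + q)! : ℂ) ≠ 0 := by simp [Nat.factorial_ne_zero]
  calc _ = a ^ (k + p) * b ^ (k + q) * (-1) ^ k * ξ ^ p * conj ξ ^ q / (k ! * p ! * q !) *
        ((k + p)! * (k + q)! / ((k + p)! * (k + q)!)) * (ν ^ (k + p + (k + q)) / ν ^ k) := by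
        ring
    _ = _ := by
        rw [div_self hfac, pow_add_add_div_pow]
        ring

theorem hermiteC_generating_function_general (ν : ℝ) (a b ξ : ℂ) :
    Summable (fun mn : ℕ × ℕ =>
        a ^ mn.1 * b ^ mn.2 / ((mn.1.factorial : ℂ) * (mn.2.factorial : ℂ)) *
          hermiteC ν mn.1 mn.2 ξ) ∧
      Complex.exp ((ν : ℂ) * (a * ξ + b * starRingEnd ℂ ξ - a * b)) =
        ∑' mn : ℕ × ℕ,
          a ^ mn.1 * b ^ mn.2 / ((mn.1.factorial : ℂ) * (mn.2.factorial : ℂ)) *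
            hermiteC ν mn.1 mn.2 ξ := by
  suffices h : HasSum (fun mn : ℕ × ℕ => a ^ mn.1 * b ^ mn.2 / (mn.1 ! * mn.2 !) *
      hermiteC ν mn.1 mn.2 ξ) (exp (ν * (a * ξ + b * conj ξ - a * b))) from
    ⟨h.summable, h.tsum_eq.symm⟩
  have hexp := hasSum_pow_div_factorial_mul_mul (-(ν * a * b)) (ν * a * ξ) (ν * b * conj ξ)
  have hgrouped := (sigmaFinMinSuccEquiv.hasSum_iff.2 hexp).sigma fun mn => hasSum_fintype _
  rw [← exp_eq_exp_ℂ, ← exp_add, ← exp_add,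
    show -(ν * a * b) + (ν * a * ξ + ν * b * conj ξ) = ν * (a * ξ + b * conj ξ - a * b) by ring]
    at hgrouped
  refine hgrouped.congr_fun fun ⟨m, n⟩ => ?_
  rw [hermiteC_coeff_eq_sum, ← Fin.sum_univ_eq_sum_range]
  rfl

theorem hermiteC_generating_function (ν : ℝ) (hν : 0 < ν) (a b ξ : ℂ) :
    Summable (fun mn : ℕ × ℕ =>
        a ^ mn.1 * b ^ mn.2 / ((mn.1.factorial : ℂ) * (mn.2.factorial : ℂ)) *
          hermiteC ν mn.1 mn.2 ξ) ∧
      Complex.exp ((ν : ℂ) * (a * ξ + b * starRingEnd ℂ ξ - a * b)) =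
        ∑' mn : ℕ × ℕ,
          a ^ mn.1 * b ^ mn.2 / ((mn.1.factorial : ℂ) * (mn.2.factorial : ℂ)) *
            hermiteC ν mn.1 mn.2 ξ :=
  hermiteC_generating_function_general ν a b ξ
end

section
/- For all complex z, ξ, every nonnegative integer n, and ν > 0, we have ν^n (ξ̄ − z)^n e^{ν ξ z} = Σ_{m=0}^∞ (z^m/m!) H^ν_{m,n}(ξ, ξ̄), with absolute convergence of the series. -/
/-!
Writing `w = ν ξ z`, each term of the series expands as
`z^m / m! · H^ν_{m,n}(ξ, ξ̄) = Σ_{k ≤ min(m,n)} C(n,k) ν^n (-z)^k ξ̄^(n-k) · w^(m-k) / (m-k)!`,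
so the series is the Cauchy product of the binomial expansion of `ν^n (ξ̄ - z)^n` with the
exponential series of `w`. Since the first factor is a finite sum, the series is a finite
linear combination of shifted exponential series, which converge absolutely to `e^w`.
-/

open Complex

open Finset

theorem HasSum.ite_le_sub {M : Type*} [AddCommMonoid M] [TopologicalSpace M] {f : ℕ → M} {a : M}
    (hf : HasSum f a) (k : ℕ) : HasSum (fun m => if k ≤ m then f (m - k) else 0) a := by
  refine ((add_left_injective k).hasSum_iff fun m hm => if_neg fun hkm => ?_).mp ?_
  · exact hm ⟨m - k, Nat.sub_add_cancel hkm⟩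
  · simpa [Function.comp_def] using hf

theorem Complex.hasSum_exp (w : ℂ) : HasSum (fun j => w ^ j / j.factorial) (exp w) :=
  exp_eq_exp_ℂ ▸ NormedSpace.expSeries_div_hasSum_exp w

theorem mul_hermiteC_eq_sum {ν : ℝ} (hν : ν ≠ 0) (z ξ : ℂ) (m n : ℕ) :
    z ^ m / m.factorial * hermiteC ν m n ξ =
      ∑ k ∈ range (n + 1), (ν : ℂ) ^ n * ((-z) ^ k * starRingEnd ℂ ξ ^ (n - k) * n.choose k) *
        if k ≤ m then ((ν : ℂ) * ξ * z) ^ (m - k) / (m - k).factorial else 0 := by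
  have hrange : (range (n + 1)).filter (· ≤ m) = range (min m n + 1) := by
    ext k
    simp only [mem_filter, mem_range]
    omega
  simp only [mul_ite, mul_zero]
  rw [← Finset.sum_filter, hrange, hermiteC, mul_sum, mul_sum]
  refine Finset.sum_congr rfl fun k hk => ?_
  have hk' := mem_range.mp hk
  have hkn : k ≤ n := by omega
  obtain ⟨j, rfl⟩ := Nat.exists_eq_add_of_le (by omega : k ≤ m)
  have hνC : (ν : ℂ) ≠ 0 := by exact_mod_cast hν
  have hfac : ((k + j).factorial : ℂ) ≠ 0 := Nat.cast_ne_zero.mpr (Nat.factorial_ne_zero _)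
  rw [Nat.add_sub_cancel_left, Nat.cast_choose ℂ hkn, neg_pow z, mul_pow, mul_pow, pow_add, pow_add,
    pow_add]
  field_simp

theorem hermiteC_generating_function' (ν : ℝ) (hν : 0 < ν) (z ξ : ℂ) (n : ℕ) :
    Summable (fun m : ℕ => z ^ m / (m.factorial : ℂ) * hermiteC ν m n ξ) ∧
      (ν : ℂ) ^ n * (starRingEnd ℂ ξ - z) ^ n * Complex.exp ((ν : ℂ) * ξ * z) =
        ∑' m : ℕ, z ^ m / (m.factorial : ℂ) * hermiteC ν m n ξ := by
  have hsum : HasSum (fun m : ℕ => z ^ m / (m.factorial : ℂ) * hermiteC ν m n ξ)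
      (∑ k ∈ range (n + 1), (ν : ℂ) ^ n * ((-z) ^ k * starRingEnd ℂ ξ ^ (n - k) * n.choose k) *
        exp ((ν : ℂ) * ξ * z)) := by
    simp only [mul_hermiteC_eq_sum hν.ne']
    exact hasSum_sum fun k _ => ((hasSum_exp _).ite_le_sub k).mul_left _
  rw [← Finset.sum_mul, ← mul_sum, ← add_pow, neg_add_eq_sub] at hsum
  exact ⟨hsum.summable, hsum.tsum_eq.symm⟩
end

section
/- Let K(z,w) = (ν/π) Σ_{γ∈Γ} χ(γ) e^{−(ν/2)|γ|² + ν(z γ̄ − w̄ γ + z w̄)} with χ a unimodular pseudo-character. Then K satisfies the Γ-bi-invariance K(z+γ, w+γ') = χ(γ) e^{(ν/2)|γ|² + ν z γ̄} K(z,w) conj(χ(γ')) e^{(ν/2)|γ'|² + ν w̄ γ'} for all z, w ∈ C and γ, γ' ∈ Γ. -/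
/-- The lattice point `m ω₁ + n ω₂` of the lattice `Γ = ℤω₁ + ℤω₂`. -/
noncomputable def latPt (ω₁ ω₂ : ℂ) (p : ℤ × ℤ) : ℂ := (p.1 : ℂ) * ω₁ + (p.2 : ℂ) * ω₂

/-- The `(Γ,χ)`-automorphic reproducing kernel function
`K(z,w) = (ν/π) Σ_{γ∈Γ} χ(γ) e^{−(ν/2)|γ|² + ν(z γ̄ − w̄ γ + z w̄)}`. -/
noncomputable def autoKer (ν : ℝ) (ω₁ ω₂ : ℂ) (χ : ℂ → ℂ) (z w : ℂ) : ℂ :=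
  ((ν / Real.pi : ℝ) : ℂ) *
    ∑' γ : ℤ × ℤ,
      χ (latPt ω₁ ω₂ γ) *
        Complex.exp (-(ν : ℂ) / 2 * (‖latPt ω₁ ω₂ γ‖ : ℂ) ^ 2 +
          (ν : ℂ) * (z * starRingEnd ℂ (latPt ω₁ ω₂ γ) - starRingEnd ℂ w * latPt ω₁ ω₂ γ +
            z * starRingEnd ℂ w))

/-!
Translating `z` by a lattice point `b` and reindexing the series by `γ ↦ γ + b` turns each term
into the same term at `z`, times the automorphy factor `χ(b) e^{(ν/2)|b|² + ν z b̄}`: the phase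
`e^{(ν/2)(γ b̄ − γ̄ b)}` produced by the pseudo-character cancels the cross terms of `|γ + b|²`.
For the second variable one uses the Hermitian symmetry `K(z,w) = conj K(w,z)`, which follows
from `χ(−γ) = conj χ(γ)` by reindexing with `γ ↦ −γ`.
-/

open Complex ComplexConjugate

noncomputable def latPtHom (ω₁ ω₂ : ℂ) : ℤ × ℤ →+ ℂ where
  toFun := latPt ω₁ ω₂
  map_zero' := by simp [latPt]
  map_add' p q := by simp only [latPt, Prod.fst_add, Prod.snd_add, Int.cast_add]; ring

@[simp]
theorem latPtHom_apply (ω₁ ω₂ : ℂ) (p : ℤ × ℤ) : latPtHom ω₁ ω₂ p = latPt ω₁ ω₂ p :=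
  rfl

theorem latPt_add (ω₁ ω₂ : ℂ) (p q : ℤ × ℤ) :
    latPt ω₁ ω₂ (p + q) = latPt ω₁ ω₂ p + latPt ω₁ ω₂ q :=
  map_add (latPtHom ω₁ ω₂) p q

theorem latPt_neg (ω₁ ω₂ : ℂ) (p : ℤ × ℤ) : latPt ω₁ ω₂ (-p) = -latPt ω₁ ω₂ p :=
  map_neg (latPtHom ω₁ ω₂) p

section PseudoCharacter

variable {G : Type*} [AddGroup G]

def IsPseudoChar (ν : ℝ) (ℓ : G →+ ℂ) (χ : ℂ → ℂ) : Prop :=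
  ∀ g h, χ (ℓ g + ℓ h) = χ (ℓ g) * χ (ℓ h) * exp (ν / 2 * (ℓ g * conj (ℓ h) - conj (ℓ g) * ℓ h))

variable (ℓ : G →+ ℂ) {ν : ℝ} {χ : ℂ → ℂ}

theorem pseudoChar_zero (hχ : IsPseudoChar ν ℓ χ) (hχ0 : χ 0 ≠ 0) : χ 0 = 1 := by
  have h := hχ 0 0
  simp only [map_zero, add_zero, mul_zero, sub_zero, exp_zero, mul_one] at h
  exact (mul_right_eq_self₀.mp h.symm).resolve_right hχ0

theorem pseudoChar_neg (hχ : IsPseudoChar ν ℓ χ)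
    (hunit : ∀ g, ‖χ (ℓ g)‖ = 1) (g : G) : χ (-ℓ g) = conj (χ (ℓ g)) := by
  have hχ0 : χ 0 = 1 := pseudoChar_zero ℓ hχ fun h0 ↦ by simpa [h0] using hunit 0
  have hinv : χ (ℓ g) * χ (-ℓ g) = 1 := by
    have h := hχ g (-g)
    rw [map_neg, add_neg_cancel, hχ0, map_neg,
      show ℓ g * -conj (ℓ g) - conj (ℓ g) * -ℓ g = 0 by ring, mul_zero, exp_zero, mul_one] at h
    exact h.symm
  have hconj : χ (ℓ g) * conj (χ (ℓ g)) = 1 := by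
    rw [mul_conj, normSq_eq_norm_sq, hunit g]; norm_num
  exact mul_left_cancel₀ (left_ne_zero_of_mul_eq_one hinv) (hinv.trans hconj.symm)

end PseudoCharacter

noncomputable def autoKerTerm (ν : ℝ) (ω₁ ω₂ : ℂ) (χ : ℂ → ℂ) (z w : ℂ) (γ : ℤ × ℤ) : ℂ :=
  χ (latPt ω₁ ω₂ γ) *
    exp (-(ν : ℂ) / 2 * (‖latPt ω₁ ω₂ γ‖ : ℂ) ^ 2 +
      (ν : ℂ) * (z * conj (latPt ω₁ ω₂ γ) - conj w * latPt ω₁ ω₂ γ + z * conj w))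

section Kernel

variable {ν : ℝ} {ω₁ ω₂ : ℂ} {χ : ℂ → ℂ}

theorem autoKer_eq_tsum (z w : ℂ) :
    autoKer ν ω₁ ω₂ χ z w = ((ν / Real.pi : ℝ) : ℂ) * ∑' γ, autoKerTerm ν ω₁ ω₂ χ z w γ :=
  rfl

theorem autoKerTerm_add_left
    (hχ : IsPseudoChar ν (latPtHom ω₁ ω₂) χ) (z w : ℂ) (p δ : ℤ × ℤ) :
    autoKerTerm ν ω₁ ω₂ χ (z + latPt ω₁ ω₂ p) w (δ + p) =
      χ (latPt ω₁ ω₂ p) *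
        exp (ν / 2 * (‖latPt ω₁ ω₂ p‖ : ℂ) ^ 2 + ν * z * conj (latPt ω₁ ω₂ p)) *
        autoKerTerm ν ω₁ ω₂ χ z w δ := by
  simp only [autoKerTerm, latPt_add, ← mul_conj', map_add]
  set a := latPt ω₁ ω₂ δ
  set b := latPt ω₁ ω₂ p
  have hexp : ν / 2 * (a * conj b - conj a * b) +
      (-ν / 2 * ((a + b) * (conj a + conj b)) +
        ν * ((z + b) * (conj a + conj b) - conj w * (a + b) + (z + b) * conj w)) =
      (ν / 2 * (b * conj b) + ν * z * conj b) +
      (-ν / 2 * (a * conj a) + ν * (z * conj a - conj w * a + z * conj w)) := by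
    ring
  rw [show χ (a + b) = χ a * χ b * exp (ν / 2 * (a * conj b - conj a * b)) from hχ δ p,
    mul_assoc, ← exp_add, hexp, exp_add]
  ring

theorem autoKer_add_left
    (hχ : IsPseudoChar ν (latPtHom ω₁ ω₂) χ) (z w : ℂ) (p : ℤ × ℤ) :
    autoKer ν ω₁ ω₂ χ (z + latPt ω₁ ω₂ p) w =
      χ (latPt ω₁ ω₂ p) *
        exp (ν / 2 * (‖latPt ω₁ ω₂ p‖ : ℂ) ^ 2 + ν * z * conj (latPt ω₁ ω₂ p)) *
        autoKer ν ω₁ ω₂ χ z w := by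
  rw [autoKer_eq_tsum, autoKer_eq_tsum, ← (Equiv.addRight p).tsum_eq]
  simp only [Equiv.coe_addRight, autoKerTerm_add_left hχ, tsum_mul_left]
  ring

theorem conj_autoKerTerm
    (hχ : ∀ γ, χ (-latPt ω₁ ω₂ γ) = conj (χ (latPt ω₁ ω₂ γ))) (z w : ℂ) (γ : ℤ × ℤ) :
    conj (autoKerTerm ν ω₁ ω₂ χ w z γ) = autoKerTerm ν ω₁ ω₂ χ z w (-γ) := by
  simp only [autoKerTerm, latPt_neg, hχ, norm_neg, map_mul, ← exp_conj, map_add, map_sub,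
    map_neg, map_div₀, map_pow, map_ofNat, conj_ofReal, conj_conj]
  congr 2
  ring

theorem autoKer_eq_conj_swap
    (hχ : ∀ γ, χ (-latPt ω₁ ω₂ γ) = conj (χ (latPt ω₁ ω₂ γ))) (z w : ℂ) :
    autoKer ν ω₁ ω₂ χ z w = conj (autoKer ν ω₁ ω₂ χ w z) := by
  rw [autoKer_eq_tsum, autoKer_eq_tsum, map_mul, conj_ofReal, conj_tsum]
  simp only [conj_autoKerTerm hχ]
  exact congrArg _ ((Equiv.neg (ℤ × ℤ)).tsum_eq _).symm

end Kernel

theorem autoKer_bi_invariance_general (ν : ℝ) (ω₁ ω₂ : ℂ) (χ : ℂ → ℂ)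
    (hχuni : ∀ p : ℤ × ℤ, ‖χ (latPt ω₁ ω₂ p)‖ = 1)
    (hχpseudo : ∀ p q : ℤ × ℤ,
      χ (latPt ω₁ ω₂ p + latPt ω₁ ω₂ q) =
        χ (latPt ω₁ ω₂ p) * χ (latPt ω₁ ω₂ q) *
          Complex.exp (((ν : ℂ) / 2) *
            (latPt ω₁ ω₂ p * starRingEnd ℂ (latPt ω₁ ω₂ q) -
              starRingEnd ℂ (latPt ω₁ ω₂ p) * latPt ω₁ ω₂ q))) :
    ∀ (z w : ℂ) (p q : ℤ × ℤ),
      autoKer ν ω₁ ω₂ χ (z + latPt ω₁ ω₂ p) (w + latPt ω₁ ω₂ q) =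
        χ (latPt ω₁ ω₂ p) *
          Complex.exp ((ν : ℂ) / 2 * (‖latPt ω₁ ω₂ p‖ : ℂ) ^ 2 +
            (ν : ℂ) * z * starRingEnd ℂ (latPt ω₁ ω₂ p)) *
          autoKer ν ω₁ ω₂ χ z w *
          starRingEnd ℂ (χ (latPt ω₁ ω₂ q)) *
          Complex.exp ((ν : ℂ) / 2 * (‖latPt ω₁ ω₂ q‖ : ℂ) ^ 2 +
            (ν : ℂ) * starRingEnd ℂ w * latPt ω₁ ω₂ q) := by
  intro z w p q
  have hneg : ∀ γ, χ (-latPt ω₁ ω₂ γ) = conj (χ (latPt ω₁ ω₂ γ)) :=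
    pseudoChar_neg (latPtHom ω₁ ω₂) hχpseudo hχuni
  rw [autoKer_eq_conj_swap hneg, autoKer_add_left hχpseudo, map_mul, map_mul,
    ← autoKer_eq_conj_swap hneg, autoKer_add_left hχpseudo, ← exp_conj]
  simp only [map_add, map_mul, map_div₀, map_pow, map_ofNat, conj_ofReal, conj_conj]
  ring

theorem autoKer_bi_invariance (ν : ℝ) (hν : 0 < ν) (ω₁ ω₂ : ℂ)
    (hrank : (ω₁ * starRingEnd ℂ ω₂).im ≠ 0) (χ : ℂ → ℂ)
    (hχuni : ∀ p : ℤ × ℤ, ‖χ (latPt ω₁ ω₂ p)‖ = 1)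
    (hχpseudo : ∀ p q : ℤ × ℤ,
      χ (latPt ω₁ ω₂ p + latPt ω₁ ω₂ q) =
        χ (latPt ω₁ ω₂ p) * χ (latPt ω₁ ω₂ q) *
          Complex.exp (((ν : ℂ) / 2) *
            (latPt ω₁ ω₂ p * starRingEnd ℂ (latPt ω₁ ω₂ q) -
              starRingEnd ℂ (latPt ω₁ ω₂ p) * latPt ω₁ ω₂ q)))
    (hsum : ∀ z w : ℂ, Summable fun γ : ℤ × ℤ =>
      χ (latPt ω₁ ω₂ γ) *
        Complex.exp (-(ν : ℂ) / 2 * (‖latPt ω₁ ω₂ γ‖ : ℂ) ^ 2 +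
          (ν : ℂ) * (z * starRingEnd ℂ (latPt ω₁ ω₂ γ) - starRingEnd ℂ w * latPt ω₁ ω₂ γ +
            z * starRingEnd ℂ w))) :
    ∀ (z w : ℂ) (p q : ℤ × ℤ),
      autoKer ν ω₁ ω₂ χ (z + latPt ω₁ ω₂ p) (w + latPt ω₁ ω₂ q) =
        χ (latPt ω₁ ω₂ p) *
          Complex.exp ((ν : ℂ) / 2 * (‖latPt ω₁ ω₂ p‖ : ℂ) ^ 2 +
            (ν : ℂ) * z * starRingEnd ℂ (latPt ω₁ ω₂ p)) *
          autoKer ν ω₁ ω₂ χ z w *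
          starRingEnd ℂ (χ (latPt ω₁ ω₂ q)) *
          Complex.exp ((ν : ℂ) / 2 * (‖latPt ω₁ ω₂ q‖ : ℂ) ^ 2 +
            (ν : ℂ) * starRingEnd ℂ w * latPt ω₁ ω₂ q) :=
  autoKer_bi_invariance_general ν ω₁ ω₂ χ hχuni hχpseudo
end

section
/- Let Γ be a full-rank lattice, ν > 0, χ a unimodular pseudo-character, and define the complex Hermite-Taylor coefficients a_{m,n} = Σ_{γ∈Γ} χ(γ) e^{−(ν/2)|γ|²} H^ν_{m,n}(γ, γ̄). Then the reproducing kernel K(z,w) = (ν/π) Σ_{γ∈Γ} χ(γ) e^{−(ν/2)|γ|² + ν(z γ̄ − w̄ γ + z w̄)} admits the absolutely convergent power series expansion K(z,w) = (ν/π) Σ_{m,n=0}^∞ (−1)^m a_{m,n} z^n w̄^m / (m! n!). -/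
open Complex

/-- The complex Hermite-Taylor coefficient `a_{m,n} = Σ_{γ∈Γ} χ(γ) e^{−(ν/2)|γ|²} H^ν_{m,n}(γ, γ̄)`. -/
noncomputable def aCoeff (ν : ℝ) (ω₁ ω₂ : ℂ) (χ : ℂ → ℂ) (m n : ℕ) : ℂ :=
  ∑' γ : ℤ × ℤ,
    χ (latPt ω₁ ω₂ γ) * Complex.exp (-(ν : ℂ) / 2 * (‖latPt ω₁ ω₂ γ‖ : ℂ) ^ 2) *
      hermiteC ν m n (latPt ω₁ ω₂ γ)


/-!
Writing `a = -w̄`, `b = z`, the exponential `e^{ν(aγ + bγ̄ - ab)}` is the product of three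
exponential series, indexed by `(j, l, k)`. Grouping the terms with `(j + k, l + k) = (m, n)`
turns that triple series into `Σ H^ν_{m,n}(γ, γ̄) a^m b^n / (m! n!)`. After multiplication by
`χ(γ) e^{-(ν/2)|γ|²}` the family indexed by `Γ × ℕ³` is absolutely summable, because the
Gaussian factor beats `e^{ν(|a| + |b|)|γ|}`; the latter is bounded by the sum of
`e^{ν Re(y γ̄)}` over the four directions `y ∈ (|a| + |b|)(±1 ± i)`, each of which is summable
against the Gaussian by the convergence of the kernel series. Fubini then exchanges the sum over
`Γ` with the sum over `(m, n)`.
-/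

open ComplexConjugate

section ExpTriple

variable {𝕜 : Type*} [RCLike 𝕜]

noncomputable def expTriple (x y u : 𝕜) (p : ℕ × ℕ × ℕ) : 𝕜 :=
  x ^ p.1 / p.1.factorial * (y ^ p.2.1 / p.2.1.factorial * (u ^ p.2.2 / p.2.2.factorial))

theorem hasSum_expTriple (x y u : 𝕜) :
    HasSum (expTriple x y u) (NormedSpace.exp x * (NormedSpace.exp y * NormedSpace.exp u)) := by
  set e : 𝕜 → ℕ → 𝕜 := fun v n => v ^ n / n.factorial
  have hs (v : 𝕜) : Summable fun n => ‖e v n‖ := NormedSpace.norm_expSeries_div_summable v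
  have he (v : 𝕜) : HasSum (e v) (NormedSpace.exp v) := NormedSpace.expSeries_div_hasSum_exp v
  have hyu := (he y).mul (f := e y) (g := e u) (he u)
    (summable_mul_of_summable_norm (f := e y) (g := e u) (hs y) (hs u))
  exact (he x).mul (f := e x) (g := fun q : ℕ × ℕ => e y q.1 * e u q.2) hyu
    (summable_mul_of_summable_norm (f := e x) (g := fun q : ℕ × ℕ => e y q.1 * e u q.2) (hs x)
      ((hs y).mul_norm (f := e y) (g := e u) (hs u)))

theorem norm_expTriple (x y u : 𝕜) (p : ℕ × ℕ × ℕ) :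
    ‖expTriple x y u p‖ = expTriple ‖x‖ ‖y‖ ‖u‖ p := by
  simp only [expTriple, norm_mul, norm_div, norm_pow, RCLike.norm_natCast]

theorem summable_prod_mul_expTriple {ι : Type*} (c x y : ι → 𝕜) (u : 𝕜)
    (h : Summable fun i => ‖c i‖ * Real.exp (‖x i‖ + ‖y i‖)) :
    Summable fun q : ι × (ℕ × ℕ × ℕ) => c q.1 * expTriple (x q.1) (y q.1) u q.2 := by
  have hnorm (i : ι) : HasSum (fun p => ‖c i * expTriple (x i) (y i) u p‖)
      (‖c i‖ * Real.exp (‖x i‖ + ‖y i‖) * Real.exp ‖u‖) := by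
    have h3 := (hasSum_expTriple ‖x i‖ ‖y i‖ ‖u‖).mul_left ‖c i‖
    rw [← Real.exp_eq_exp_ℝ] at h3
    simpa only [norm_mul, norm_expTriple, Real.exp_add, mul_assoc] using h3
  refine .of_norm ((summable_prod_of_nonneg fun _ => norm_nonneg _).2
    ⟨fun i => (hnorm i).summable, ?_⟩)
  simpa only [fun i => (hnorm i).tsum_eq] using h.mul_right (Real.exp ‖u‖)

end ExpTriple

theorem tsum_expTriple_eq_cexp (ν : ℝ) (a b ξ : ℂ) :
    ∑' p, expTriple ((ν : ℂ) * a * ξ) ((ν : ℂ) * b * conj ξ) (-((ν : ℂ) * a * b)) p =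
      Complex.exp ((ν : ℂ) * (a * ξ + b * conj ξ - a * b)) := by
  rw [(hasSum_expTriple _ _ _).tsum_eq, ← Complex.exp_eq_exp_ℂ, ← Complex.exp_add,
    ← Complex.exp_add]
  ring_nf

theorem sum_expTriple_eq_hermiteC {ν : ℝ} (hν : ν ≠ 0) (a b ξ : ℂ) (m n : ℕ) :
    ∑ k ∈ Finset.range (min m n + 1),
        expTriple ((ν : ℂ) * a * ξ) ((ν : ℂ) * b * conj ξ) (-((ν : ℂ) * a * b)) (m - k, n - k, k) =
      hermiteC ν m n ξ * (a ^ m * b ^ n / (m.factorial * n.factorial)) := by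
  rw [hermiteC, Finset.mul_sum, Finset.sum_mul]
  refine Finset.sum_congr rfl fun k hk => ?_
  obtain ⟨j, rfl⟩ : ∃ j, m = j + k := ⟨m - k, by grind⟩
  obtain ⟨l, rfl⟩ : ∃ l, n = l + k := ⟨n - k, by grind⟩
  have hν' : (ν : ℂ) ≠ 0 := Complex.ofReal_ne_zero.mpr hν
  have := (j + k).factorial_ne_zero
  have := (l + k).factorial_ne_zero
  simp only [expTriple, Nat.add_sub_cancel]
  field_simp
  ring

def sigmaFinMinEquiv : (Σ mn : ℕ × ℕ, Fin (min mn.1 mn.2 + 1)) ≃ ℕ × ℕ × ℕ where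
  toFun σ := (σ.1.1 - σ.2, σ.1.2 - σ.2, σ.2)
  invFun p := ⟨(p.1 + p.2.2, p.2.1 + p.2.2), ⟨p.2.2, by omega⟩⟩
  left_inv := by
    rintro ⟨⟨m, n⟩, ⟨k, hk⟩⟩
    refine Sigma.ext ?_ ?_
    · simp only [Prod.mk.injEq]
      omega
    · rw [Fin.heq_ext_iff (by simp only; omega)]
  right_inv := by
    rintro ⟨j, l, k⟩
    simp

theorem hasSum_sigmaFinMinEquiv {ι E : Type*} [NormedAddCommGroup E] [CompleteSpace E]
    {F : ι × (ℕ × ℕ × ℕ) → E} (hF : Summable F) :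
    HasSum (fun mn : ℕ × ℕ => ∑ k : Fin (min mn.1 mn.2 + 1),
        ∑' i, F (i, sigmaFinMinEquiv ⟨mn, k⟩))
      (∑' i, ∑' p, F (i, p)) := by
  have hswap : HasSum (fun p => ∑' i, F (i, p)) (∑' i, ∑' p, F (i, p)) := by
    rw [← hF.tsum_prod' hF.prod_factor, ← (Equiv.prodComm _ _).tsum_eq]
    exact hF.prod_symm.hasSum.prod_fiberwise fun p => (hF.prod_symm.prod_factor p).hasSum
  exact ((sigmaFinMinEquiv.hasSum_iff).mpr hswap).sigma fun mn => hasSum_fintype _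

theorem exp_mul_norm_le_sum_exp_re (r : ℝ) (hr : 0 ≤ r) (ξ : ℂ) :
    Real.exp (r * ‖ξ‖) ≤
      Real.exp ((r * (1 + I) * conj ξ).re) + Real.exp ((r * (1 - I) * conj ξ).re) +
        Real.exp ((r * (-1 + I) * conj ξ).re) + Real.exp ((r * (-1 - I) * conj ξ).re) := by
  calc Real.exp (r * ‖ξ‖) ≤ Real.exp |r * ξ.re| * Real.exp |r * ξ.im| := by
        rw [← Real.exp_add, abs_mul, abs_mul, abs_of_nonneg hr]
        gcongr
        nlinarith [Complex.norm_le_abs_re_add_abs_im ξ]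
    _ ≤ (Real.exp (r * ξ.re) + Real.exp (-(r * ξ.re))) *
          (Real.exp (r * ξ.im) + Real.exp (-(r * ξ.im))) := by
        gcongr <;> exact Real.exp_abs_le _
    _ = _ := by
        simp only [← Real.exp_add, add_mul, mul_add, mul_re, mul_im, ofReal_re, ofReal_im, conj_re,
          conj_im, add_re, sub_re, sub_im, neg_re, neg_im, one_re, one_im, I_re, I_im]
        ring_nf

theorem summable_norm_mul_exp_mul_norm {ι : Type*} (c f : ι → ℂ)
    (h : ∀ y : ℂ, Summable fun i => c i * Complex.exp (y * conj (f i))) {r : ℝ} (hr : 0 ≤ r) :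
    Summable fun i => ‖c i‖ * Real.exp (r * ‖f i‖) := by
  have hre (y : ℂ) : Summable fun i => ‖c i‖ * Real.exp ((y * conj (f i)).re) := by
    simpa only [norm_mul, Complex.norm_exp] using (h y).norm
  refine .of_nonneg_of_le (fun i => by positivity) (fun i => ?_)
    ((((hre (r * (1 + I))).add (hre (r * (1 - I)))).add (hre (r * (-1 + I)))).add
      (hre (r * (-1 - I))))
  simp only [← mul_add]
  gcongr
  exact exp_mul_norm_le_sum_exp_re r hr (f i)

theorem hasSum_tsum_mul_hermiteC {ι : Type*} (c f : ι → ℂ) {ν : ℝ} (hν : ν ≠ 0) (a b : ℂ)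
    (hc : ∀ r, 0 ≤ r → Summable fun i => ‖c i‖ * Real.exp (r * ‖f i‖)) :
    HasSum (fun mn : ℕ × ℕ => (∑' i, c i * hermiteC ν mn.1 mn.2 (f i)) *
        (a ^ mn.1 * b ^ mn.2 / (mn.1.factorial * mn.2.factorial)))
      (∑' i, c i * Complex.exp ((ν : ℂ) * (a * f i + b * conj (f i) - a * b))) := by
  set x : ι → ℂ := fun i => (ν : ℂ) * a * f i
  set y : ι → ℂ := fun i => (ν : ℂ) * b * conj (f i)
  set F : ι × (ℕ × ℕ × ℕ) → ℂ := fun q => c q.1 * expTriple (x q.1) (y q.1) (-((ν : ℂ) * a * b)) q.2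
  have hF : Summable F := by
    refine summable_prod_mul_expTriple c x y _ <|
      (hc (|ν| * (‖a‖ + ‖b‖)) (by positivity)).congr fun i => ?_
    simp only [x, y, norm_mul, Complex.norm_conj, Complex.norm_real, Real.norm_eq_abs]
    ring_nf
  have hfiber (p : ℕ × ℕ × ℕ) : Summable fun i => F (i, p) := hF.prod_symm.prod_factor p
  have hcoeff : (fun mn : ℕ × ℕ => (∑' i, c i * hermiteC ν mn.1 mn.2 (f i)) *
      (a ^ mn.1 * b ^ mn.2 / (mn.1.factorial * mn.2.factorial))) =
        fun mn => ∑ k : Fin (min mn.1 mn.2 + 1), ∑' i, F (i, sigmaFinMinEquiv ⟨mn, k⟩) := by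
    funext mn
    obtain ⟨m, n⟩ := mn
    calc (∑' i, c i * hermiteC ν m n (f i)) * (a ^ m * b ^ n / (m.factorial * n.factorial))
        = ∑' i, ∑ k ∈ Finset.range (min m n + 1), F (i, (m - k, n - k, k)) := by
          rw [← tsum_mul_right]
          refine tsum_congr fun i => ?_
          simp only [F, x, y, ← Finset.mul_sum]
          rw [sum_expTriple_eq_hermiteC hν, mul_assoc]
      _ = ∑ k : Fin (min m n + 1), ∑' i, F (i, sigmaFinMinEquiv ⟨(m, n), k⟩) := by
          rw [Summable.tsum_finsetSum fun k _ => hfiber _]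
          exact (Fin.sum_univ_eq_sum_range (fun k => ∑' i, F (i, (m - k, n - k, k))) _).symm
  have hvalue : ∑' i, c i * Complex.exp ((ν : ℂ) * (a * f i + b * conj (f i) - a * b)) =
      ∑' i, ∑' p, F (i, p) := by
    refine tsum_congr fun i => ?_
    simp only [F, x, y]
    rw [tsum_mul_left, tsum_expTriple_eq_cexp]
  rw [hcoeff, hvalue]
  exact hasSum_sigmaFinMinEquiv hF

theorem autoKer_power_series_expansion_general (ν : ℝ) (hν : 0 < ν) (ω₁ ω₂ : ℂ)
    (χ : ℂ → ℂ)
    (hsum : ∀ z w : ℂ, Summable fun γ : ℤ × ℤ =>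
      χ (latPt ω₁ ω₂ γ) *
        Complex.exp (-(ν : ℂ) / 2 * (‖latPt ω₁ ω₂ γ‖ : ℂ) ^ 2 +
          (ν : ℂ) * (z * starRingEnd ℂ (latPt ω₁ ω₂ γ) - starRingEnd ℂ w * latPt ω₁ ω₂ γ +
            z * starRingEnd ℂ w))) :
    ∀ z w : ℂ,
      Summable (fun mn : ℕ × ℕ =>
        (-1 : ℂ) ^ mn.1 * aCoeff ν ω₁ ω₂ χ mn.1 mn.2 * z ^ mn.2 * (starRingEnd ℂ w) ^ mn.1 /
          ((mn.1.factorial : ℂ) * (mn.2.factorial : ℂ))) ∧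
      autoKer ν ω₁ ω₂ χ z w =
        ((ν / Real.pi : ℝ) : ℂ) *
          ∑' mn : ℕ × ℕ,
            (-1 : ℂ) ^ mn.1 * aCoeff ν ω₁ ω₂ χ mn.1 mn.2 * z ^ mn.2 * (starRingEnd ℂ w) ^ mn.1 /
              ((mn.1.factorial : ℂ) * (mn.2.factorial : ℂ)) := by
  intro z w
  set c : ℤ × ℤ → ℂ := fun γ =>
    χ (latPt ω₁ ω₂ γ) * Complex.exp (-(ν : ℂ) / 2 * (‖latPt ω₁ ω₂ γ‖ : ℂ) ^ 2)
  have hc (r : ℝ) (hr : 0 ≤ r) : Summable fun γ => ‖c γ‖ * Real.exp (r * ‖latPt ω₁ ω₂ γ‖) := by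
    refine summable_norm_mul_exp_mul_norm c _ (fun y => (hsum (y / ν) 0).congr fun γ => ?_) hr
    have hν' : (ν : ℂ) ≠ 0 := Complex.ofReal_ne_zero.mpr hν.ne'
    simp only [c]
    rw [map_zero, Complex.exp_add]
    field_simp
    ring_nf
  have H := hasSum_tsum_mul_hermiteC c (latPt ω₁ ω₂) hν.ne' (-conj w) z hc
  have hterm (mn : ℕ × ℕ) :
      (∑' γ, c γ * hermiteC ν mn.1 mn.2 (latPt ω₁ ω₂ γ)) *
          ((-conj w) ^ mn.1 * z ^ mn.2 / (mn.1.factorial * mn.2.factorial)) =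
        (-1 : ℂ) ^ mn.1 * aCoeff ν ω₁ ω₂ χ mn.1 mn.2 * z ^ mn.2 * (conj w) ^ mn.1 /
          (mn.1.factorial * mn.2.factorial) := by
    simp only [aCoeff, c, neg_pow (conj w)]
    ring
  refine ⟨H.summable.congr hterm, ?_⟩
  rw [autoKer, ← tsum_congr hterm, H.tsum_eq]
  congr 1
  refine tsum_congr fun γ => ?_
  simp only [c]
  rw [mul_assoc, ← Complex.exp_add]
  ring_nf

theorem autoKer_power_series_expansion (ν : ℝ) (hν : 0 < ν) (ω₁ ω₂ : ℂ)
    (hrank : (ω₁ * starRingEnd ℂ ω₂).im ≠ 0) (χ : ℂ → ℂ)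
    (hχuni : ∀ p : ℤ × ℤ, ‖χ (latPt ω₁ ω₂ p)‖ = 1)
    (hχpseudo : ∀ p q : ℤ × ℤ,
      χ (latPt ω₁ ω₂ p + latPt ω₁ ω₂ q) =
        χ (latPt ω₁ ω₂ p) * χ (latPt ω₁ ω₂ q) *
          Complex.exp (((ν : ℂ) / 2) *
            (latPt ω₁ ω₂ p * starRingEnd ℂ (latPt ω₁ ω₂ q) -
              starRingEnd ℂ (latPt ω₁ ω₂ p) * latPt ω₁ ω₂ q)))
    (hsum : ∀ z w : ℂ, Summable fun γ : ℤ × ℤ =>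
      χ (latPt ω₁ ω₂ γ) *
        Complex.exp (-(ν : ℂ) / 2 * (‖latPt ω₁ ω₂ γ‖ : ℂ) ^ 2 +
          (ν : ℂ) * (z * starRingEnd ℂ (latPt ω₁ ω₂ γ) - starRingEnd ℂ w * latPt ω₁ ω₂ γ +
            z * starRingEnd ℂ w)))
    (hasum : ∀ m n : ℕ, Summable fun γ : ℤ × ℤ =>
      χ (latPt ω₁ ω₂ γ) * Complex.exp (-(ν : ℂ) / 2 * (‖latPt ω₁ ω₂ γ‖ : ℂ) ^ 2) *
        hermiteC ν m n (latPt ω₁ ω₂ γ)) :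
    ∀ z w : ℂ,
      Summable (fun mn : ℕ × ℕ =>
        (-1 : ℂ) ^ mn.1 * aCoeff ν ω₁ ω₂ χ mn.1 mn.2 * z ^ mn.2 * (starRingEnd ℂ w) ^ mn.1 /
          ((mn.1.factorial : ℂ) * (mn.2.factorial : ℂ))) ∧
      autoKer ν ω₁ ω₂ χ z w =
        ((ν / Real.pi : ℝ) : ℂ) *
          ∑' mn : ℕ × ℕ,
            (-1 : ℂ) ^ mn.1 * aCoeff ν ω₁ ω₂ χ mn.1 mn.2 * z ^ mn.2 * (starRingEnd ℂ w) ^ mn.1 /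
              ((mn.1.factorial : ℂ) * (mn.2.factorial : ℂ)) :=
  autoKer_power_series_expansion_general ν hν ω₁ ω₂ χ hsum
end

section
/- Let Γ be a full-rank lattice, ν > 0, χ a unimodular pseudo-character, and define the Poincaré series of the monomial e_m by P_m(z) = Σ_{γ∈Γ} χ(γ) (z−γ)^m e^{−(ν/2)|γ|² + ν z γ̄}. Then the reproducing kernel satisfies K(z,w) = (ν/π) Σ_{m=0}^∞ P_m(z) (ν w̄)^m / m!, with absolute convergence. -/
/-- The Poincaré series of the monomial `e_m`:
`P_m(z) = Σ_{γ∈Γ} χ(γ) (z−γ)^m e^{−(ν/2)|γ|² + ν z γ̄}`. -/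
noncomputable def poincareMonomial (ν : ℝ) (ω₁ ω₂ : ℂ) (χ : ℂ → ℂ) (m : ℕ) (z : ℂ) : ℂ :=
  ∑' γ : ℤ × ℤ,
    χ (latPt ω₁ ω₂ γ) * (z - latPt ω₁ ω₂ γ) ^ m *
      Complex.exp (-(ν : ℂ) / 2 * (‖latPt ω₁ ω₂ γ‖ : ℂ) ^ 2 +
        (ν : ℂ) * z * starRingEnd ℂ (latPt ω₁ ω₂ γ))

lemma aux_exp_abs_le (x : ℝ) : Real.exp |x| ≤ Real.exp x + Real.exp (-x) := by
  rcases abs_cases x with ⟨h, _⟩ | ⟨h, _⟩ <;> rw [h] <;>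
    nlinarith [(Real.exp_pos x).le, (Real.exp_pos (-x)).le]

lemma aux_cexp_eq_tsum (x : ℂ) : Complex.exp x = ∑' n : ℕ, x ^ n / (n.factorial : ℂ) := by
  rw [Complex.exp_eq_exp_ℂ, NormedSpace.exp_eq_tsum_div]

lemma aux_rexp_eq_tsum (x : ℝ) : Real.exp x = ∑' n : ℕ, x ^ n / (n.factorial : ℝ) := by
  rw [Real.exp_eq_exp_ℝ, NormedSpace.exp_eq_tsum_div]

lemma aux_nu_a_re (ν c e₁ e₂ : ℝ) (hν : ν ≠ 0) (u : ℂ) :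
    ((ν : ℂ) * (((c / ν : ℝ) : ℂ) * ((e₁ : ℂ) + (e₂ : ℂ) * Complex.I)) *
        starRingEnd ℂ u).re = e₁ * (c * u.re) + e₂ * (c * u.im) := by
  simp only [Complex.mul_re, Complex.mul_im, Complex.conj_re, Complex.conj_im,
    Complex.ofReal_re, Complex.ofReal_im, Complex.add_re, Complex.add_im, Complex.I_re,
    Complex.I_im]
  field_simp
  ring

set_option maxHeartbeats 1000000 in
theorem autoKer_poincare_expansion (ν : ℝ) (hν : 0 < ν) (ω₁ ω₂ : ℂ)
    (hrank : (ω₁ * starRingEnd ℂ ω₂).im ≠ 0) (χ : ℂ → ℂ)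
    (hχuni : ∀ p : ℤ × ℤ, ‖χ (latPt ω₁ ω₂ p)‖ = 1)
    (hχpseudo : ∀ p q : ℤ × ℤ,
      χ (latPt ω₁ ω₂ p + latPt ω₁ ω₂ q) =
        χ (latPt ω₁ ω₂ p) * χ (latPt ω₁ ω₂ q) *
          Complex.exp (((ν : ℂ) / 2) *
            (latPt ω₁ ω₂ p * starRingEnd ℂ (latPt ω₁ ω₂ q) -
              starRingEnd ℂ (latPt ω₁ ω₂ p) * latPt ω₁ ω₂ q)))
    (hsum : ∀ z w : ℂ, Summable fun γ : ℤ × ℤ =>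
      χ (latPt ω₁ ω₂ γ) *
        Complex.exp (-(ν : ℂ) / 2 * (‖latPt ω₁ ω₂ γ‖ : ℂ) ^ 2 +
          (ν : ℂ) * (z * starRingEnd ℂ (latPt ω₁ ω₂ γ) - starRingEnd ℂ w * latPt ω₁ ω₂ γ +
            z * starRingEnd ℂ w)))
    (hPsum : ∀ (m : ℕ) (z : ℂ), Summable fun γ : ℤ × ℤ =>
      χ (latPt ω₁ ω₂ γ) * (z - latPt ω₁ ω₂ γ) ^ m *
        Complex.exp (-(ν : ℂ) / 2 * (‖latPt ω₁ ω₂ γ‖ : ℂ) ^ 2 +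
          (ν : ℂ) * z * starRingEnd ℂ (latPt ω₁ ω₂ γ))) :
    ∀ z w : ℂ,
      Summable (fun m : ℕ =>
        poincareMonomial ν ω₁ ω₂ χ m z * ((ν : ℂ) * starRingEnd ℂ w) ^ m /
          (m.factorial : ℂ)) ∧
      autoKer ν ω₁ ω₂ χ z w =
        ((ν / Real.pi : ℝ) : ℂ) *
          ∑' m : ℕ,
            poincareMonomial ν ω₁ ω₂ χ m z * ((ν : ℂ) * starRingEnd ℂ w) ^ m /
              (m.factorial : ℂ) := by
  intro z w
  set L : ℤ × ℤ → ℂ := latPt ω₁ ω₂ with hL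
  set c : ℝ := ν * ‖w‖ with hc
  have hc0 : 0 ≤ c := mul_nonneg hν.le (norm_nonneg _)
  have hχuni' : ∀ p : ℤ × ℤ, ‖χ (L p)‖ = 1 := hχuni
  set A : ℤ × ℤ → ℂ := fun γ =>
    -(ν : ℂ) / 2 * (‖L γ‖ : ℂ) ^ 2 + (ν : ℂ) * z * starRingEnd ℂ (L γ) with hAdef
  set F : (ℤ × ℤ) × ℕ → ℂ := fun p =>
    χ (L p.1) * (z - L p.1) ^ p.2 * Complex.exp (A p.1) *
      (((ν : ℂ) * starRingEnd ℂ w) ^ p.2 / (p.2.factorial : ℂ)) with hFdef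
  set g : (ℤ × ℤ) × ℕ → ℝ := fun p =>
    Real.exp ((A p.1).re) *
      ((‖z - L p.1‖ * c) ^ p.2 / (p.2.factorial : ℝ)) with hgdef
  set N : ℝ → ℝ → ℤ × ℤ → ℝ := fun e₁ e₂ γ =>
    Real.exp ((A γ).re + (e₁ * (c * (L γ).re) + e₂ * (c * (L γ).im))) with hNdef
  have hg0 : ∀ p, 0 ≤ g p := by
    intro p
    exact mul_nonneg (Real.exp_pos _).le
      (div_nonneg (pow_nonneg (mul_nonneg (norm_nonneg _) hc0) _) (Nat.cast_nonneg _))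
  -- ‖F p‖ = g p
  have hnormF : ∀ p, ‖F p‖ = g p := by
    intro p
    simp only [hFdef, hgdef, norm_mul, norm_div, norm_pow, map_mul,
      Complex.norm_conj, Complex.norm_real, Real.norm_eq_abs, Complex.norm_natCast, Complex.norm_exp, hχuni']
    rw [abs_of_pos hν, ← hc]
    rw [mul_pow]
    ring
  -- summability of the four shifted families
  have hN : ∀ e₁ e₂ : ℝ, Summable (N e₁ e₂) := by
    intro e₁ e₂
    set a : ℂ := ((c / ν : ℝ) : ℂ) * ((e₁ : ℂ) + (e₂ : ℂ) * Complex.I) with ha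
    have h0 : Summable fun γ : ℤ × ℤ =>
        ‖χ (L γ) * Complex.exp (-(ν : ℂ) / 2 * (‖L γ‖ : ℂ) ^ 2 +
          (ν : ℂ) * ((z + a) * starRingEnd ℂ (L γ) - starRingEnd ℂ (0 : ℂ) * (L γ) +
            (z + a) * starRingEnd ℂ (0 : ℂ)))‖ := summable_norm_iff.mpr (hsum (z + a) 0)
    refine h0.congr fun γ => ?_
    rw [norm_mul, hχuni' γ, one_mul, Complex.norm_exp]
    have hE : (-(ν : ℂ) / 2 * (‖L γ‖ : ℂ) ^ 2 +
        (ν : ℂ) * ((z + a) * starRingEnd ℂ (L γ) - starRingEnd ℂ (0 : ℂ) * (L γ) +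
          (z + a) * starRingEnd ℂ (0 : ℂ))) = A γ + (ν : ℂ) * a * starRingEnd ℂ (L γ) := by
      simp only [map_zero, mul_zero, add_zero, zero_mul, sub_zero, hAdef]
      ring
    rw [hE, Complex.add_re, ha, aux_nu_a_re ν c e₁ e₂ hν.ne' (L γ), hNdef]
  -- pointwise bound by the dominating family
  have hbound : ∀ γ : ℤ × ℤ, Real.exp ((A γ).re + c * ‖z - L γ‖) ≤
      Real.exp (c * ‖z‖) *
        ((N 1 1 γ + N 1 (-1) γ) + (N (-1) 1 γ + N (-1) (-1) γ)) := by
    intro γ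
    have habs : ‖z - L γ‖ ≤ ‖z‖ + (|(L γ).re| + |(L γ).im|) := by
      calc ‖z - L γ‖ ≤ ‖z‖ + ‖L γ‖ := by
            exact norm_sub_le z (L γ)
        _ ≤ _ := add_le_add le_rfl (Complex.norm_le_abs_re_add_abs_im _)
    have h2 : (A γ).re + c * ‖z - L γ‖ ≤
        (A γ).re + (c * ‖z‖ + (|c * (L γ).re| + |c * (L γ).im|)) := by
      have h3 := mul_le_mul_of_nonneg_left habs hc0
      simp only [abs_mul, abs_of_nonneg hc0]
      nlinarith
    calc Real.exp ((A γ).re + c * ‖z - L γ‖)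
        ≤ Real.exp ((A γ).re + (c * ‖z‖ + (|c * (L γ).re| + |c * (L γ).im|))) :=
          Real.exp_le_exp.mpr h2
      _ = Real.exp (c * ‖z‖) *
          (Real.exp ((A γ).re) * (Real.exp |c * (L γ).re| * Real.exp |c * (L γ).im|)) := by
          rw [Real.exp_add, Real.exp_add, Real.exp_add]; ring
      _ ≤ Real.exp (c * ‖z‖) *
          (Real.exp ((A γ).re) *
            ((Real.exp (c * (L γ).re) + Real.exp (-(c * (L γ).re))) *
              (Real.exp (c * (L γ).im) + Real.exp (-(c * (L γ).im))))) := by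
          have p1 := aux_exp_abs_le (c * (L γ).re)
          have p2 := aux_exp_abs_le (c * (L γ).im)
          have e1 := (Real.exp_pos |c * (L γ).re|).le
          have e2 := (Real.exp_pos |c * (L γ).im|).le
          have e3 := (Real.exp_pos ((A γ).re)).le
          have e4 := (Real.exp_pos (c * ‖z‖)).le
          have e5 : (0:ℝ) ≤ Real.exp (c * (L γ).re) + Real.exp (-(c * (L γ).re)) := by positivity
          gcongr
      _ = _ := by
          simp only [hNdef, Real.exp_add, one_mul, neg_one_mul, Real.exp_neg]
          ring
  -- summability of the norms g
  have htsumg : ∀ γ : ℤ × ℤ, ∑' m : ℕ, g (γ, m) =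
      Real.exp ((A γ).re + c * ‖z - L γ‖) := by
    intro γ
    simp only [hgdef]
    rw [tsum_mul_left, Real.exp_add]
    congr 1
    rw [mul_comm c, aux_rexp_eq_tsum]
  have hgsum : Summable g := by
    refine (summable_prod_of_nonneg hg0).mpr ⟨fun γ => ?_, ?_⟩
    · simp only [hgdef]
      exact (Real.summable_pow_div_factorial (‖z - L γ‖ * c)).mul_left
        (Real.exp ((A γ).re))
    · have hDsum : Summable fun γ : ℤ × ℤ =>
          Real.exp (c * ‖z‖) *
            ((N 1 1 γ + N 1 (-1) γ) + (N (-1) 1 γ + N (-1) (-1) γ)) :=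
        (((hN 1 1).add (hN 1 (-1))).add ((hN (-1) 1).add (hN (-1) (-1)))).mul_left _
      exact (Summable.of_nonneg_of_le (fun γ => (Real.exp_pos _).le) hbound hDsum).congr
        fun γ => (htsumg γ).symm
  have hFsum : Summable F :=
    Summable.of_norm (hgsum.congr fun p => (hnormF p).symm)
  -- value of the fiberwise sums over γ
  have hPm : ∀ m : ℕ, (∑' γ : ℤ × ℤ, F (γ, m)) =
      poincareMonomial ν ω₁ ω₂ χ m z * ((ν : ℂ) * starRingEnd ℂ w) ^ m /
        (m.factorial : ℂ) := by
    intro m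
    simp only [hFdef]
    rw [tsum_mul_right, mul_div_assoc]
    congr 1
  constructor
  · have h := hFsum.prod_symm.prod
    exact (h.congr fun m => hPm m)
  · simp only [autoKer, ← hL]
    congr 1
    have hterm : ∀ γ : ℤ × ℤ,
        χ (L γ) * Complex.exp (-(ν : ℂ) / 2 * (‖L γ‖ : ℂ) ^ 2 +
          (ν : ℂ) * (z * starRingEnd ℂ (L γ) - starRingEnd ℂ w * (L γ) +
            z * starRingEnd ℂ w)) = ∑' m : ℕ, F (γ, m) := by
      intro γ
      have hE : (-(ν : ℂ) / 2 * (‖L γ‖ : ℂ) ^ 2 +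
          (ν : ℂ) * (z * starRingEnd ℂ (L γ) - starRingEnd ℂ w * (L γ) +
            z * starRingEnd ℂ w)) = A γ + ((ν : ℂ) * starRingEnd ℂ w) * (z - L γ) := by
        simp only [hAdef]; ring
      calc χ (L γ) * Complex.exp (-(ν : ℂ) / 2 * (‖L γ‖ : ℂ) ^ 2 +
          (ν : ℂ) * (z * starRingEnd ℂ (L γ) - starRingEnd ℂ w * (L γ) +
            z * starRingEnd ℂ w))
          = (χ (L γ) * Complex.exp (A γ)) *
              Complex.exp (((ν : ℂ) * starRingEnd ℂ w) * (z - L γ)) := by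
            rw [hE, Complex.exp_add]; ring
        _ = (χ (L γ) * Complex.exp (A γ)) *
              ∑' m : ℕ, (((ν : ℂ) * starRingEnd ℂ w) * (z - L γ)) ^ m / (m.factorial : ℂ) := by
            rw [← aux_cexp_eq_tsum]
        _ = ∑' m : ℕ, (χ (L γ) * Complex.exp (A γ)) *
              ((((ν : ℂ) * starRingEnd ℂ w) * (z - L γ)) ^ m / (m.factorial : ℂ)) :=
            tsum_mul_left.symm
        _ = ∑' m : ℕ, F (γ, m) := tsum_congr fun m => by
            simp only [hFdef]
            rw [mul_pow]
            ring
    calc (∑' γ : ℤ × ℤ, χ (L γ) * Complex.exp (-(ν : ℂ) / 2 * (‖L γ‖ : ℂ) ^ 2 +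
          (ν : ℂ) * (z * starRingEnd ℂ (L γ) - starRingEnd ℂ w * (L γ) + z * starRingEnd ℂ w)))
        = ∑' γ : ℤ × ℤ, ∑' m : ℕ, F (γ, m) := tsum_congr hterm
      _ = ∑' m : ℕ, ∑' γ : ℤ × ℤ, F (γ, m) := (Summable.tsum_comm (f := fun (γ : ℤ × ℤ) (m : ℕ) => F (γ, m)) hFsum).symm
      _ = _ := tsum_congr fun m => hPm m
end
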